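/- Let a cube diagram of size n be given, with markings encoded as: X markings at (i, σ(i), a(i)), Y markings at (i, σ'(i), a'(i)), Z markings at (i, σ''(i), a''(i)) for permutations of Fin n, where segments join X to Y, Y to Z, and Z to X whenever two of their three coordinates agree. Then the projection to the (x,y)-plane sending each marking to its first two coordinates yields a grid diagram: the images of the X markings and the Z markings each hit every row and every column exactly once, and no X marking has the same (x,y)-coordinates as any Z marking. -/
import Mathlib


/-- Let a cube diagram of size `n` be given, with X markings at `(i, σx i, τx i)`,
Y markings at `(i, σy i, τy i)` and Z markings at `(i, σz i, τz i)` for permutations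
`σx, τx, σy, τy, σz, τz` of `Fin n`; the hypotheses express the cube-diagram
conditions that in every flat the three markings are distinct and form an
axis-parallel right angle whose corner is the marking of the flat's type.
Then the projection to the `(x,y)`-plane is a grid diagram: the images of the X
markings and of the Z markings each meet every row and every column exactly once,
and no X marking projects to the same point as a Z marking. -/
theorem cube_projection_is_grid (n : ℕ)
    (σx τx σy τy σz τz : Equiv.Perm (Fin n))
    -- x-flats: markings distinct, corner is the X marking
    (hxd : ∀ i : Fin n,
      ((σx i, τx i) ≠ (σy i, τy i)) ∧ ((σx i, τx i) ≠ (σz i, τz i)) ∧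
      ((σy i, τy i) ≠ (σz i, τz i)))
    (hxc : ∀ i : Fin n,
      (σx i = σy i ∧ τx i = τz i) ∨ (σx i = σz i ∧ τx i = τy i))
    -- y-flats: markings distinct, corner is the Y marking
    (hyd : ∀ i j l : Fin n, σx i = σy j → σz l = σy j →
      (((i : Fin n), τx i) ≠ (j, τy j)) ∧ (((i : Fin n), τx i) ≠ (l, τz l)) ∧
      ((j, τy j) ≠ (l, τz l)))
    (hyc : ∀ i j l : Fin n, σx i = σy j → σz l = σy j →
      (j = i ∧ τy j = τz l) ∨ (j = l ∧ τy j = τx i))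
    -- z-flats: markings distinct, corner is the Z marking
    (hzd : ∀ i j l : Fin n, τx i = τy j → τz l = τy j →
      (((i : Fin n), σx i) ≠ (j, σy j)) ∧ (((i : Fin n), σx i) ≠ (l, σz l)) ∧
      ((j, σy j) ≠ (l, σz l)))
    (hzc : ∀ i j l : Fin n, τx i = τy j → τz l = τy j →
      (l = i ∧ σz l = σy j) ∨ (l = j ∧ σz l = σx i)) :
    (∀ r : Fin n, ∃! i : Fin n, σx i = r) ∧
    (∀ r : Fin n, ∃! i : Fin n, σz i = r) ∧
    (∀ i j : Fin n, ((i : Fin n), σx i) ≠ (j, σz j)) := by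
  refine ⟨fun r => ⟨σx.symm r, σx.apply_symm_apply r, fun y hy => σx.injective (by simp [hy])⟩,
    fun r => ⟨σz.symm r, σz.apply_symm_apply r, fun y hy => σz.injective (by simp [hy])⟩,
    fun i j h => ?_⟩
  have hij : i = j := congrArg Prod.fst h
  have hs : σx i = σz j := congrArg Prod.snd h
  subst hij
  rcases hxc i with ⟨h1, h2⟩ | ⟨h1, h2⟩
  · -- σx i = σy i, τx i = τz i; then σz i = σy i
    have hz : σz i = σy i := hs ▸ h1
    have := (hyd i i i h1 hz).1
    rcases hyc i i i h1 hz with ⟨_, h3⟩ | ⟨_, h3⟩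
    · exact this (by rw [h2, ← h3])
    · exact this (by rw [← h3])
  · -- σx i = σz i, τx i = τy i
    have hzl : τz (τz.symm (τy i)) = τy i := τz.apply_symm_apply _
    rcases hzc i i (τz.symm (τy i)) h2 hzl with ⟨h3, _⟩ | ⟨h3, _⟩ <;>
    · refine (hxd i).2.1 ?_
      rw [Prod.mk.injEq]
      have h4 : τz i = τy i := (congrArg τz h3).symm.trans hzl
      exact ⟨hs, h2.trans h4.symm⟩
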